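/- arXiv:1907.02761 — 5 statements merged into one kernel-verified Lean document; each statement's English description precedes it below -/
import Mathlib

section
/- For channel gains h_k ≥ h_ℓ > 0 and power weights ω_k, ω_ℓ ∈ (0,1], the descending-order asymptotic NOMA gain Δ↓ = log₂(ω_k √(h_k/h_ℓ)) is, under the perfect-sensitivity power disparity constraint ω_ℓ h_ℓ ≥ ω_k h_k, bounded above by (1/2)(log₂ h_ℓ − log₂ h_k), which is nonpositive. -/
/-- Descending-order asymptotic NOMA gain bound: under the perfect-sensitivity
power disparity constraint `ωℓ·hℓ ≥ ωk·hk`, the gain `Δ↓ = log₂(ωk √(hk/hℓ))`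
is bounded above by `(1/2)(log₂ hℓ − log₂ hk)`, which is nonpositive. -/
theorem stmt_0 (hk hl ωk ωl : ℝ) (hhl : 0 < hl) (hkl : hl ≤ hk)
    (hωk0 : 0 < ωk) (hωk1 : ωk ≤ 1) (hωl0 : 0 < ωl) (hωl1 : ωl ≤ 1)
    (hsic : ωk * hk ≤ ωl * hl) :
    Real.logb 2 (ωk * Real.sqrt (hk / hl)) ≤
      (1 / 2) * (Real.logb 2 hl - Real.logb 2 hk) ∧
    (1 / 2) * (Real.logb 2 hl - Real.logb 2 hk) ≤ 0 := by
  have hhk : 0 < hk := lt_of_lt_of_le hhl hkl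
  have hωk' : ωk ≤ hl / hk := by
    rw [le_div_iff₀ hhk]
    calc ωk * hk ≤ ωl * hl := hsic
      _ ≤ 1 * hl := by nlinarith
      _ = hl := one_mul hl
  have hstep : ωk * Real.sqrt (hk / hl) ≤ Real.sqrt (hl / hk) := by
    have h1 : ωk * Real.sqrt (hk / hl) ≤ (hl / hk) * Real.sqrt (hk / hl) :=
      mul_le_mul_of_nonneg_right hωk' (Real.sqrt_nonneg _)
    have h2 : (hl / hk) * Real.sqrt (hk / hl) = Real.sqrt (hl / hk) := by
      rw [show hl / hk = Real.sqrt ((hl/hk)^2) by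
        rw [Real.sqrt_sq (by positivity)]]
      rw [← Real.sqrt_mul (by positivity)]
      congr 1
      rw [Real.sqrt_sq (by positivity)]
      field_simp
    linarith
  constructor
  · have hpos : 0 < ωk * Real.sqrt (hk / hl) := by positivity
    have := Real.logb_le_logb_of_le (by norm_num : (1:ℝ) < 2) hpos hstep
    refine this.trans ?_
    rw [Real.logb, Real.logb, Real.logb, Real.log_sqrt (by positivity),
      Real.log_div (ne_of_gt hhl) (ne_of_gt hhk)]
    ring_nf
    linarith
  · have := Real.logb_le_logb_of_le (by norm_num : (1:ℝ) < 2) hhl hkl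
    linarith
end

section
/- The largest feasible cluster size K(ε, Γ̄) = ln(ε)/ln((1+εΓ̄)/(1+Γ̄)) is strictly decreasing in Γ̄ > 0 for fixed ε ∈ (0,1); i.e., lower SINR demands permit larger clusters. -/
/-- The (real-valued) largest feasible cluster size
`K(ε,Γ̄) = ln ε / ln((1+εΓ̄)/(1+Γ̄))` is strictly decreasing in `Γ̄ > 0`. -/
theorem stmt_7 (ε : ℝ) (hε0 : 0 < ε) (hε1 : ε < 1) :
    ∀ Γ₁ Γ₂ : ℝ, 0 < Γ₁ → Γ₁ < Γ₂ →
      Real.log ε / Real.log ((1 + ε * Γ₂) / (1 + Γ₂)) <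
        Real.log ε / Real.log ((1 + ε * Γ₁) / (1 + Γ₁)) := by
  intro Γ₁ Γ₂ h1 h12
  have h2 : 0 < Γ₂ := h1.trans h12
  have hd1 : (0:ℝ) < 1 + Γ₁ := by linarith
  have hd2 : (0:ℝ) < 1 + Γ₂ := by linarith
  have hn1 : (0:ℝ) < 1 + ε * Γ₁ := by nlinarith
  have hn2 : (0:ℝ) < 1 + ε * Γ₂ := by nlinarith
  have hr2pos : (0:ℝ) < (1 + ε * Γ₂) / (1 + Γ₂) := div_pos hn2 hd2
  have hr21 : (1 + ε * Γ₂) / (1 + Γ₂) < (1 + ε * Γ₁) / (1 + Γ₁) := by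
    rw [div_lt_div_iff₀ hd2 hd1]; nlinarith
  have hr1lt1 : (1 + ε * Γ₁) / (1 + Γ₁) < 1 := by
    rw [div_lt_one hd1]; nlinarith
  have hl1 : Real.log ((1 + ε * Γ₁) / (1 + Γ₁)) < 0 :=
    Real.log_neg (hr2pos.trans hr21) hr1lt1
  have hl21 : Real.log ((1 + ε * Γ₂) / (1 + Γ₂)) < Real.log ((1 + ε * Γ₁) / (1 + Γ₁)) :=
    Real.log_lt_log hr2pos hr21
  have hlε : Real.log ε < 0 := Real.log_neg hε0 hε1
  have key : (-Real.log ε) / (-Real.log ((1 + ε * Γ₂) / (1 + Γ₂))) <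
      (-Real.log ε) / (-Real.log ((1 + ε * Γ₁) / (1 + Γ₁))) :=
    div_lt_div_of_pos_left (by linarith) (by linarith) (by linarith)
  simpa [neg_div_neg_eq] using key
end

section
/- Let K ≥ 1, ε ∈ (0,1), Γ̄ > 0, σ² > 0, and suppose the denominator D = 1 − (1+εΓ̄)/(1−ε) + ((1+εΓ̄)/(1−ε))·((1+εΓ̄)/(1+Γ̄))^{K−1} is positive. Then the powers p_k = ((1+εΓ̄)/(1+Γ̄))^{k−1} · Γ̄σ²/D, for k = 1,…,K, satisfy the identical-SINR equations p_k = Γ̄(ε Σ_{j<k} p_j + Σ_{j>k} p_j + σ²) for every k. -/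
/-- The powers `p_k = r^{k−1}·Γ̄σ²/D`, `r = (1+εΓ̄)/(1+Γ̄)`, satisfy the
identical-SINR equations `p_k = Γ̄(ε Σ_{j<k} p_j + Σ_{j>k} p_j + σ²)`
for every `k = 1,…,K`. -/
theorem stmt_9 (ε Γ σ2 D : ℝ) (K : ℕ) (hK : 1 ≤ K)
    (hε0 : 0 < ε) (hε1 : ε < 1) (hΓ : 0 < Γ) (hσ : 0 < σ2)
    (hD : D = 1 - (1 + ε * Γ) / (1 - ε) +
      ((1 + ε * Γ) / (1 - ε)) * ((1 + ε * Γ) / (1 + Γ)) ^ (K - 1))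
    (hD0 : 0 < D) :
    ∀ k ∈ Finset.Icc 1 K,
      ((1 + ε * Γ) / (1 + Γ)) ^ (k - 1) * (Γ * σ2 / D) =
        Γ * (ε * ∑ j ∈ Finset.Icc 1 (k - 1),
              ((1 + ε * Γ) / (1 + Γ)) ^ (j - 1) * (Γ * σ2 / D) +
            ∑ j ∈ Finset.Icc (k + 1) K,
              ((1 + ε * Γ) / (1 + Γ)) ^ (j - 1) * (Γ * σ2 / D) +
            σ2) := by
  intro k hk
  obtain ⟨hk1, hkK⟩ := Finset.mem_Icc.mp hk
  set r : ℝ := (1 + ε * Γ) / (1 + Γ) with hr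
  have h1Γ : (0:ℝ) < 1 + Γ := by linarith
  have h1ε : (0:ℝ) < 1 - ε := by linarith
  have hrlt : r < 1 := by
    rw [hr, div_lt_one h1Γ]; nlinarith
  have hr1 : (1:ℝ) - r ≠ 0 := by linarith
  have geom : ∀ m : ℕ, ∑ j ∈ Finset.Icc 1 m, r ^ (j - 1) = (1 - r ^ m) / (1 - r) := by
    intro m
    induction m with
    | zero => simp
    | succ n ih =>
      rw [Finset.sum_Icc_succ_top (by omega : 1 ≤ n + 1), ih]
      have : n + 1 - 1 = n := rfl
      rw [this, pow_succ]
      field_simp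
      ring
  have split : (∑ j ∈ Finset.Icc 1 k, r ^ (j - 1)) + ∑ j ∈ Finset.Icc (k+1) K, r ^ (j - 1)
      = ∑ j ∈ Finset.Icc 1 K, r ^ (j - 1) := by
    rw [show (Finset.Icc 1 k : Finset ℕ) = Finset.Ioc 0 k by rfl,
        show (Finset.Icc (k+1) K : Finset ℕ) = Finset.Ioc k K from (Finset.Icc_add_one_left_eq_Ioc k K),
        show (Finset.Icc 1 K : Finset ℕ) = Finset.Ioc 0 K by rfl]
    exact Finset.sum_Ioc_consecutive _ (Nat.zero_le k) hkK
  have hsum2 : ∑ j ∈ Finset.Icc (k+1) K, r ^ (j - 1) = (r ^ k - r ^ K) / (1 - r) := by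
    have := split
    rw [geom k, geom K] at this
    field_simp at this ⊢
    linarith
  have hck : r ^ k = r * r ^ (k - 1) := by
    conv_lhs => rw [show k = (k-1)+1 by omega]
    rw [pow_succ]; ring
  have hcK : r ^ K = r * r ^ (K - 1) := by
    conv_lhs => rw [show K = (K-1)+1 by omega]
    rw [pow_succ]; ring
  have e1 : ∑ j ∈ Finset.Icc 1 (k-1), r ^ (j - 1) * (Γ * σ2 / D)
      = ((1 - r ^ (k-1)) / (1 - r)) * (Γ * σ2 / D) := by
    rw [← Finset.sum_mul, geom]
  have e2 : ∑ j ∈ Finset.Icc (k+1) K, r ^ (j - 1) * (Γ * σ2 / D)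
      = ((r ^ k - r ^ K) / (1 - r)) * (Γ * σ2 / D) := by
    rw [← Finset.sum_mul, hsum2]
  rw [e1, e2, hck, hcK]
  have hDr : D = ((1 + Γ) / (1 - ε)) * (r * r ^ (K - 1) - ε) := by
    rw [hD, hr]
    field_simp
    ring
  rw [hDr]
  have hD0' : ((1 + Γ) / (1 - ε)) * (r * r ^ (K - 1) - ε) ≠ 0 := by
    rw [← hDr]; exact hD0.ne'
  have hrε : 1 - r = Γ * (1 - ε) / (1 + Γ) := by
    rw [hr]; field_simp; ring
  rw [hrε]
  have h2 : r * r ^ (K - 1) - ε ≠ 0 := by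
    intro h
    apply hD0'
    rw [h, mul_zero]
  field_simp
  rw [hr]
  field_simp
  ring
end

section
/- For the three-user case S = {μ₁, μ₂, μ₃}, the weights ω₁ = ϱ/(h₁/Γ̄₁ − a₁h₂ − a₁a₂h₃), ω₂ = a₁ω₁, ω₃ = a₁a₂ω₁, with a₁ = h₁(ε + 1/Γ̄₁)/(h₂(1 + 1/Γ̄₂)) and a₂ = h₂(ε + 1/Γ̄₂)/(h₃(1 + 1/Γ̄₃)), satisfy all three SINR equations: ω₁h₁ = Γ̄₁(ω₂h₂ + ω₃h₃ + ϱ), ω₂h₂ = Γ̄₂(εω₁h₁ + ω₃h₃ + ϱ), ω₃h₃ = Γ̄₃(ε(ω₁h₁ + ω₂h₂) + ϱ), provided the common denominator is nonzero. -/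
/-- Three-user KKT case `S = {μ₁, μ₂, μ₃}`: the closed-form weights satisfy
all three SINR equations, provided the common denominator is nonzero. -/
theorem stmt_16 (h1 h2 h3 Γ1 Γ2 Γ3 ε ϱ a1 a2 ω1 ω2 ω3 : ℝ)
    (hh1 : 0 < h1) (hh2 : 0 < h2) (hh3 : 0 < h3)
    (hΓ1 : 0 < Γ1) (hΓ2 : 0 < Γ2) (hΓ3 : 0 < Γ3)
    (hε0 : 0 ≤ ε) (hε1 : ε < 1) (hϱ : 0 < ϱ)
    (ha1 : a1 = h1 * (ε + 1 / Γ1) / (h2 * (1 + 1 / Γ2)))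
    (ha2 : a2 = h2 * (ε + 1 / Γ2) / (h3 * (1 + 1 / Γ3)))
    (hden : h1 / Γ1 - a1 * h2 - a1 * a2 * h3 ≠ 0)
    (hω1 : ω1 = ϱ / (h1 / Γ1 - a1 * h2 - a1 * a2 * h3))
    (hω2 : ω2 = a1 * ω1) (hω3 : ω3 = a1 * a2 * ω1) :
    ω1 * h1 = Γ1 * (ω2 * h2 + ω3 * h3 + ϱ) ∧
    ω2 * h2 = Γ2 * (ε * (ω1 * h1) + ω3 * h3 + ϱ) ∧
    ω3 * h3 = Γ3 * (ε * (ω1 * h1 + ω2 * h2) + ϱ) := by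
  have hn1 : Γ1 ≠ 0 := hΓ1.ne'
  have hn2 : Γ2 ≠ 0 := hΓ2.ne'
  have hn3 : Γ3 ≠ 0 := hΓ3.ne'
  have hd2 : h2 * (1 + 1 / Γ2) ≠ 0 := by positivity
  have hd3 : h3 * (1 + 1 / Γ3) ≠ 0 := by positivity
  have key1 : a1 * (h2 * (1 + 1 / Γ2)) = h1 * (ε + 1 / Γ1) := by
    rw [ha1]; field_simp
  have key2 : a2 * (h3 * (1 + 1 / Γ3)) = h2 * (ε + 1 / Γ2) := by
    rw [ha2]; field_simp
  have keyD : ω1 * (h1 / Γ1 - a1 * h2 - a1 * a2 * h3) = ϱ := by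
    rw [hω1]; exact div_mul_cancel₀ ϱ hden
  subst hω2 hω3
  refine ⟨?_, ?_, ?_⟩
  · linear_combination (norm := (field_simp; ring)) Γ1 * keyD
  · linear_combination (norm := (field_simp; ring)) Γ2 * keyD + Γ2 * ω1 * key1
  · linear_combination (norm := (field_simp; ring)) Γ3 * keyD + Γ3 * ω1 * key1 + Γ3 * a1 * ω1 * key2
end

section
/- Suppose users i and max_i are both active at their SINR constraints, with all users j strictly between them active at maximum power (ω_j = 1). Then subtracting the two SINR equations yields the first-order recurrence ω_i = a_i·ω_{max_i} + b_i, where a_i = h_{max_i}(ε + 1/Γ̄_{max_i})/(h_i(1 + 1/Γ̄_i)) and b_i = (ε − 1)·(Σ_{max_i < j < i} h_j)/(h_i(1 + 1/Γ̄_i)). -/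
/-- If users `i` and `m = max_i` are active at their SINR constraints while all
users strictly between them transmit at maximum power (`ω_j = 1`), then
subtracting the two SINR equations yields the recurrence
`ω_i = a_i ω_m + b_i` with
`a_i = h_m(ε + 1/Γ̄_m)/(h_i(1 + 1/Γ̄_i))` and
`b_i = (ε − 1)(Σ_{m<j<i} h_j)/(h_i(1 + 1/Γ̄_i))`. -/
theorem stmt_17 (K i m : ℕ) (ω h Γ : ℕ → ℝ) (ε ϱ : ℝ)
    (hm1 : 1 ≤ m) (hmi : m < i) (hiK : i ≤ K)
    (hhi : 0 < h i) (hΓi : 0 < Γ i) (hhm : 0 < h m) (hΓm : 0 < Γ m)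
    (heqi : ω i * h i / Γ i =
      ε * ∑ j ∈ Finset.Icc 1 (i - 1), ω j * h j +
        ∑ j ∈ Finset.Icc (i + 1) K, ω j * h j + ϱ)
    (heqm : ω m * h m / Γ m =
      ε * ∑ j ∈ Finset.Icc 1 (m - 1), ω j * h j +
        ∑ j ∈ Finset.Icc (m + 1) K, ω j * h j + ϱ)
    (hmid : ∀ j, m < j → j < i → ω j = 1) :
    ω i = (h m * (ε + 1 / Γ m)) / (h i * (1 + 1 / Γ i)) * ω m +
      (ε - 1) * (∑ j ∈ Finset.Icc (m + 1) (i - 1), h j) /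
        (h i * (1 + 1 / Γ i)) := by
  have h1i : 1 ≤ i := hm1.trans hmi.le
  have hmi1 : m ≤ i - 1 := Nat.le_pred_of_lt hmi
  have hiK1 : i - 1 ≤ K := le_trans (Nat.sub_le i 1) hiK
  -- middle sum equals sum of h
  have hS : ∑ j ∈ Finset.Icc (m + 1) (i - 1), ω j * h j
      = ∑ j ∈ Finset.Icc (m + 1) (i - 1), h j := by
    refine Finset.sum_congr rfl fun j hj => ?_
    rw [Finset.mem_Icc] at hj
    rw [hmid j (Nat.lt_of_succ_le hj.1) (lt_of_le_of_lt hj.2 (Nat.sub_lt h1i one_pos)),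
      one_mul]
  -- split sums
  have hA : ∑ j ∈ Finset.Icc 1 (i - 1), ω j * h j
      = ∑ j ∈ Finset.Icc 1 (m - 1), ω j * h j
        + (ω m * h m + ∑ j ∈ Finset.Icc (m + 1) (i - 1), ω j * h j) := by
    rw [show Finset.Icc 1 (m - 1) = Finset.Ioc 0 (m - 1) from Finset.Icc_add_one_left_eq_Ioc 0 _,
      show Finset.Icc 1 (i - 1) = Finset.Ioc 0 (i - 1) from Finset.Icc_add_one_left_eq_Ioc 0 _,
      show Finset.Icc (m + 1) (i - 1) = Finset.Ioc m (i - 1) from Finset.Icc_add_one_left_eq_Ioc m _,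
      ← Finset.sum_Ioc_consecutive _ (Nat.zero_le (m - 1))
        (le_trans (Nat.sub_le m 1) hmi1)]
    congr 1
    rw [show Finset.Ioc (m - 1) (i - 1) = Finset.Icc m (i - 1) by
        rw [← Finset.Icc_add_one_left_eq_Ioc]; congr 1; omega,
      ← Finset.Ioc_insert_left hmi1, Finset.sum_insert Finset.left_notMem_Ioc]
  have hB : ∑ j ∈ Finset.Icc (m + 1) K, ω j * h j
      = ∑ j ∈ Finset.Icc (m + 1) (i - 1), ω j * h j
        + (ω i * h i + ∑ j ∈ Finset.Icc (i + 1) K, ω j * h j) := by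
    rw [show Finset.Icc (m + 1) K = Finset.Ioc m K from Finset.Icc_add_one_left_eq_Ioc m _,
      show Finset.Icc (m + 1) (i - 1) = Finset.Ioc m (i - 1) from Finset.Icc_add_one_left_eq_Ioc m _,
      show Finset.Icc (i + 1) K = Finset.Ioc i K from Finset.Icc_add_one_left_eq_Ioc i _,
      ← Finset.sum_Ioc_consecutive _ hmi1 hiK1]
    congr 1
    rw [show Finset.Ioc (i - 1) K = Finset.Icc i K by
        rw [← Finset.Icc_add_one_left_eq_Ioc]; congr 1; omega,
      ← Finset.Ioc_insert_left hiK, Finset.sum_insert Finset.left_notMem_Ioc]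
  rw [hA] at heqi
  rw [hB] at heqm
  have hΓi' : Γ i ≠ 0 := ne_of_gt hΓi
  have hΓm' : Γ m ≠ 0 := ne_of_gt hΓm
  have hhi' : h i * (1 + 1 / Γ i) ≠ 0 := by positivity
  rw [hS] at heqi heqm
  have key : ω i * h i * (1 + 1 / Γ i)
      = ω m * h m * (ε + 1 / Γ m)
        + (ε - 1) * ∑ j ∈ Finset.Icc (m + 1) (i - 1), h j := by
    field_simp at heqi heqm ⊢
    linear_combination Γ m * heqi - Γ i * heqm
  field_simp at key ⊢
  linear_combination key
end
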